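/- arXiv:2102.02875 — 3 statements merged into one kernel-verified Lean document; each statement's English description precedes it below -/
import Mathlib

section
/- Let P : [0,1] → L(H) be a continuously differentiable family of projections, Q(t) := P'(t)P(t) − P(t)P'(t), and U the solution of U'(t) = Q(t)U(t), U(0) = I. Then P(t)·U(t) = U(t)·P(0) for all t ∈ [0,1]. -/
/-!
Differentiating `P² = P` gives `P'P + PP' = P'`, hence `PP'P = 0` and `QP = PQ + P'`.
Then `W := PU - UP(0)` solves the linear equation `W' = QW` with `W(0) = 0`, and since `Q`
is bounded on `[0,1]`, uniqueness of solutions of Lipschitz ODEs forces `W = 0`.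
-/

open Set

namespace IsIdempotentElem

variable {R : Type*} [Ring R] {p d : R}

theorem mul_mul_eq_zero_of_add_eq (hp : IsIdempotentElem p) (hd : d * p + p * d = d) :
    p * d * p = 0 := by
  have h := congrArg (p * · * p) hd
  simp only [mul_add, add_mul, mul_assoc, hp.eq] at h
  rw [← mul_assoc p p, hp.eq] at h
  rw [mul_assoc]
  exact add_eq_left.mp h

theorem commutator_mul_eq (hp : IsIdempotentElem p) (hd : d * p + p * d = d) :
    (d * p - p * d) * p = p * (d * p - p * d) + d := by
  have hpdp := hp.mul_mul_eq_zero_of_add_eq hd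
  calc (d * p - p * d) * p = d * p - p * d * p := by rw [sub_mul, mul_assoc, hp.eq]
    _ = d * p := by rw [hpdp, sub_zero]
    _ = p * d * p - p * p * d + (d * p + p * d) := by rw [hpdp, hp.eq]; abel
    _ = p * (d * p - p * d) + d := by rw [hd]; noncomm_ring

end IsIdempotentElem

theorem HasDerivAt.mul_add_mul_eq_of_isIdempotentElem {𝕜 R : Type*} [NontriviallyNormedField 𝕜]
    [NormedRing R] [NormedAlgebra 𝕜 R] {P : 𝕜 → R} {P' : R} {t : 𝕜}
    (hP : ∀ s, IsIdempotentElem (P s)) (hPd : HasDerivAt P P' t) :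
    P' * P t + P t * P' = P' := by
  have hsq := hPd.mul hPd
  rw [show P * P = P from funext fun s => (hP s).eq] at hsq
  exact hsq.unique hPd

theorem lipschitzWith_mul_left {R : Type*} [NonUnitalSeminormedRing R] (a : R) :
    LipschitzWith ‖a‖₊ (a * ·) :=
  AddMonoidHomClass.lipschitz_of_bound_nnnorm (AddMonoidHom.mulLeft a) _ (nnnorm_mul_le a)

theorem eqOn_zero_of_hasDerivWithinAt_mul_left {R : Type*} [NormedRing R] [NormedSpace ℝ R]
    {A W : ℝ → R} {a b : ℝ} (hA : ContinuousOn A (Icc a b)) (hW : ContinuousOn W (Icc a b))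
    (hW' : ∀ t ∈ Ico a b, HasDerivWithinAt W (A t * W t) (Ici t) t) (hWa : W a = 0) :
    EqOn W 0 (Icc a b) := by
  obtain ⟨C, hC⟩ := isCompact_Icc.exists_bound_of_continuousOn hA
  have hLip : ∀ t ∈ Ico a b, LipschitzOnWith C.toNNReal (A t * ·) univ := fun t ht =>
    ((lipschitzWith_mul_left (A t)).weaken <| by
      rw [← NNReal.coe_le_coe, coe_nnnorm]
      exact (hC t (Ico_subset_Icc_self ht)).trans (Real.le_coe_toNNReal C)).lipschitzOnWith
  refine ODE_solution_unique_of_mem_Icc_right hLip hW hW' (fun _ _ => mem_univ _)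
    continuousOn_const (fun t _ => ?_) (fun _ _ => mem_univ _) hWa
  rw [Pi.zero_apply, mul_zero]
  exact hasDerivWithinAt_const t (Ici t) 0

theorem projection_intertwining_general
    {E : Type*} [NormedAddCommGroup E] [InnerProductSpace ℂ E]
    (P P' : ℝ → (E →L[ℂ] E))
    (hPd : ∀ t : ℝ, HasDerivAt P (P' t) t)
    (hP'c : Continuous P')
    (hproj : ∀ t : ℝ, P t ∘L P t = P t)
    (Q : ℝ → (E →L[ℂ] E))
    (hQ : ∀ t : ℝ, Q t = P' t ∘L P t - P t ∘L P' t)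
    (U : ℝ → (E →L[ℂ] E))
    (hU : ∀ t : ℝ, HasDerivAt U (Q t ∘L U t) t)
    (hU0 : U 0 = 1) :
    ∀ t ∈ Icc (0:ℝ) 1, P t ∘L U t = U t ∘L P 0 := by
  simp only [← ContinuousLinearMap.mul_def] at hproj hQ hU ⊢
  have hQP : ∀ t, Q t * P t = P t * Q t + P' t := fun t => by
    rw [hQ t]
    exact IsIdempotentElem.commutator_mul_eq (hproj t)
      ((hPd t).mul_add_mul_eq_of_isIdempotentElem hproj)
  have hW : ∀ t, HasDerivAt (fun s => P s * U s - U s * P 0) (Q t * (P t * U t - U t * P 0)) t :=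
    fun t => by
      refine (((hPd t).mul (hU t)).sub ((hU t).mul_const (P 0))).congr_deriv ?_
      rw [mul_sub, ← mul_assoc (Q t), hQP t]
      noncomm_ring
  have hPc : Continuous P := continuous_iff_continuousAt.2 fun t => (hPd t).continuousAt
  have hQc : Continuous Q := by
    rw [funext hQ]
    exact (hP'c.mul hPc).sub (hPc.mul hP'c)
  intro t ht
  exact sub_eq_zero.1 (eqOn_zero_of_hasDerivWithinAt_mul_left hQc.continuousOn
    (fun s _ => (hW s).continuousAt.continuousWithinAt) (fun s _ => (hW s).hasDerivWithinAt)
    (by simp [hU0]) ht)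

theorem projection_intertwining
    {E : Type*} [NormedAddCommGroup E] [InnerProductSpace ℂ E] [FiniteDimensional ℂ E]
    (P P' : ℝ → (E →L[ℂ] E))
    (hPd : ∀ t : ℝ, HasDerivAt P (P' t) t)
    (hP'c : Continuous P')
    (hproj : ∀ t : ℝ, P t ∘L P t = P t)
    (Q : ℝ → (E →L[ℂ] E))
    (hQ : ∀ t : ℝ, Q t = P' t ∘L P t - P t ∘L P' t)
    (U : ℝ → (E →L[ℂ] E))
    (hU : ∀ t : ℝ, HasDerivAt U (Q t ∘L U t) t)
    (hU0 : U 0 = 1) :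
    ∀ t ∈ Icc (0:ℝ) 1, P t ∘L U t = U t ∘L P 0 :=
  projection_intertwining_general P P' hPd hP'c hproj Q hQ U hU hU0
end

section
/- If H : [0,1] → L(ℂⁿ) is a continuously differentiable family of Hermitian operators such that for each t the lowest eigenvalue λ₀(t) is separated from the rest of the spectrum by a uniform gap δ > 0, then there exists a continuous map φ* : [0,1] → ℂⁿ with ‖φ*(t)‖ = 1 and H(t)φ*(t) = λ₀(t)φ*(t) for all t ∈ [0,1]. -/
/-!
The gap keeps every eigenvalue of `T t` other than `lam0 t` at distance more than `δ` from it, and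
`lam0` is `1`-Lipschitz in the operator norm (compare Rayleigh quotients), so the Riesz projection
`P t = (2πi)⁻¹ ∮_{|z - lam0 t| = δ} (z - T t)⁻¹ dz` onto the `lam0 t`-eigenspace depends
continuously on `t`. The ground state may be degenerate, so `P` alone does not pick a vector; but
on a stretch `[s, s']` where `‖P t - P s‖ < 1`, a unit ground state `v` at `s` is carried along as
`P t v / ‖P t v‖`, and uniform continuity of `P` on `[0, 1]` lets finitely many such stretches
cover the interval.
-/

open Set Metric Complex Module.End

section Resolvent

variable {𝕜 A : Type*} [NontriviallyNormedField 𝕜] [NormedRing A] [NormedAlgebra 𝕜 A]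
  [CompleteSpace A]

theorem continuousAt_resolvent {a : A} {z : 𝕜} (hz : z ∈ resolventSet 𝕜 a) :
    ContinuousAt (fun p : A × 𝕜 => resolvent p.1 p.2) (a, z) := by
  have h := NormedRing.inverse_continuousAt hz.unit
  rw [hz.unit_spec] at h
  exact ContinuousAt.comp (g := Ring.inverse) h
    (((continuous_algebraMap 𝕜 A).comp continuous_snd).sub continuous_fst).continuousAt

theorem continuousOn_resolvent {a : A} {s : Set 𝕜} (hs : s ⊆ resolventSet 𝕜 a) :
    ContinuousOn (resolvent a) s := fun z hz =>
  ContinuousAt.continuousWithinAt <| ContinuousAt.comp (g := fun p : A × 𝕜 => resolvent p.1 p.2)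
    (continuousAt_resolvent (hs hz)) (by fun_prop)

end Resolvent

theorem mem_resolventSet_of_not_hasEigenvalue {𝕜 E : Type*} [NontriviallyNormedField 𝕜]
    [CompleteSpace 𝕜] [NormedAddCommGroup E] [NormedSpace 𝕜 E] [FiniteDimensional 𝕜 E]
    {T : E →L[𝕜] E} {z : 𝕜} (h : ¬HasEigenvalue (T : E →ₗ[𝕜] E) z) :
    z ∈ resolventSet 𝕜 T := by
  have := FiniteDimensional.complete 𝕜 E
  rwa [hasEigenvalue_iff_mem_spectrum, ← ContinuousLinearMap.spectrum_eq, spectrum,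
    Set.mem_compl_iff, not_not] at h

theorem sphere_subset_resolventSet {E : Type*} [NormedAddCommGroup E] [NormedSpace ℂ E]
    [FiniteDimensional ℂ E] {T : E →L[ℂ] E} {l : ℂ} {r : ℝ} (hr : 0 < r)
    (hiso : ∀ μ, HasEigenvalue (T : E →ₗ[ℂ] E) μ → μ = l ∨ r < ‖μ - l‖) :
    sphere l r ⊆ resolventSet ℂ T := by
  intro z hz
  refine mem_resolventSet_of_not_hasEigenvalue fun h => ?_
  rw [mem_sphere_iff_norm] at hz
  rcases hiso z h with rfl | hfar
  · rw [sub_self, norm_zero] at hz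
    exact hr.ne hz
  · exact hfar.ne' hz

theorem resolvent_apply_of_apply_eq_smul {𝕜 E : Type*} [NontriviallyNormedField 𝕜]
    [NormedAddCommGroup E] [NormedSpace 𝕜 E] {T : E →L[𝕜] E} {z μ : 𝕜}
    (hz : z ∈ resolventSet 𝕜 T) (hne : z ≠ μ) {v : E} (hv : T v = μ • v) :
    resolvent T z v = (z - μ)⁻¹ • v := by
  have hzv : (algebraMap 𝕜 (E →L[𝕜] E) z - T) v = (z - μ) • v := by
    simp [Algebra.algebraMap_eq_smul_one, hv, sub_smul]
  rw [spectrum.resolvent_eq hz, eq_inv_smul_iff₀ (sub_ne_zero.2 hne), ← map_smul, ← hzv]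
  exact congr($(hz.unit.inv_mul) v)

theorem circleIntegral_apply {E F : Type*} [NormedAddCommGroup E] [NormedSpace ℂ E]
    [NormedAddCommGroup F] [NormedSpace ℂ F] [CompleteSpace F]
    {f : ℂ → E →L[ℂ] F} {c : ℂ} {R : ℝ} (hf : CircleIntegrable f c R) (v : E) :
    (∮ z in C(c, R), f z) v = ∮ z in C(c, R), f z v := by
  rw [circleIntegral, ContinuousLinearMap.intervalIntegral_apply hf.out v]
  rfl

section RieszProjection

variable {E : Type*} [NormedAddCommGroup E] [NormedSpace ℂ E] [CompleteSpace E]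

noncomputable def rieszProjection (T : E →L[ℂ] E) (c : ℂ) (r : ℝ) : E →L[ℂ] E :=
  (2 * Real.pi * I)⁻¹ • ∮ z in C(c, r), resolvent T z

variable {T : E →L[ℂ] E} {c μ : ℂ} {r : ℝ} {v : E}

theorem rieszProjection_apply_eq_smul (hr : 0 ≤ r) (hT : sphere c r ⊆ resolventSet ℂ T)
    (hv : T v = μ • v) (hμ : μ ∉ sphere c r) :
    rieszProjection T c r v = ((2 * Real.pi * I)⁻¹ * ∮ z in C(c, r), (z - μ)⁻¹) • v := by
  have hres : EqOn (fun z => resolvent T z v) (fun z => (z - μ)⁻¹ • v) (sphere c r) :=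
    fun z hz => resolvent_apply_of_apply_eq_smul (hT hz) (ne_of_mem_of_not_mem hz hμ) hv
  rw [rieszProjection, smul_apply,
    circleIntegral_apply ((continuousOn_resolvent hT).circleIntegrable hr),
    circleIntegral.integral_congr hr hres, circleIntegral.integral_smul_const, smul_smul]

theorem rieszProjection_apply_of_mem_ball (hT : sphere c r ⊆ resolventSet ℂ T)
    (hv : T v = μ • v) (hμ : μ ∈ ball c r) : rieszProjection T c r v = v := by
  have hr : 0 ≤ r := (pos_of_mem_ball hμ).le
  rw [rieszProjection_apply_eq_smul hr hT hv (fun h => (mem_sphere.1 h ▸ mem_ball.1 hμ).false),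
    circleIntegral.integral_sub_inv_of_mem_ball hμ, inv_mul_cancel₀ two_pi_I_ne_zero, one_smul]

theorem rieszProjection_apply_of_notMem_closedBall (hr : 0 ≤ r)
    (hT : sphere c r ⊆ resolventSet ℂ T) (hv : T v = μ • v) (hμ : μ ∉ closedBall c r) :
    rieszProjection T c r v = 0 := by
  have hne : ∀ z ∈ closedBall c r, z - μ ≠ 0 := fun z hz =>
    sub_ne_zero.2 (ne_of_mem_of_not_mem hz hμ)
  have hcauchy : (∮ z in C(c, r), (z - μ)⁻¹) = 0 :=
    Complex.circleIntegral_eq_zero_of_differentiable_on_off_countable hr countable_empty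
      (fun z hz => ((continuousAt_id.sub continuousAt_const).inv₀ (hne z hz)).continuousWithinAt)
      (fun z hz => (differentiableAt_id.sub_const μ).inv (hne z (ball_subset_closedBall hz.1)))
  rw [rieszProjection_apply_eq_smul hr hT hv (fun h => hμ (sphere_subset_closedBall h)),
    hcauchy, mul_zero, zero_smul]

theorem continuous_rieszProjection {X : Type*} [TopologicalSpace X] {T : X → E →L[ℂ] E}
    {c : X → ℂ} (hr : 0 ≤ r) (hT : Continuous T) (hc : Continuous c)
    (hres : ∀ x, sphere (c x) r ⊆ resolventSet ℂ (T x)) :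
    Continuous fun x => rieszProjection (T x) (c x) r := by
  have hcircle : Continuous fun p : X × ℝ => circleMap (c p.1) r p.2 := by
    show Continuous fun p : X × ℝ => c p.1 + r * exp (p.2 * I)
    fun_prop
  have hresolvent : Continuous fun p : X × ℝ => resolvent (T p.1) (circleMap (c p.1) r p.2) :=
    continuous_iff_continuousAt.2 fun p =>
      ContinuousAt.comp (g := fun q : (E →L[ℂ] E) × ℂ => resolvent q.1 q.2)
        (f := fun p : X × ℝ => (T p.1, circleMap (c p.1) r p.2))
        (continuousAt_resolvent (hres p.1 (circleMap_mem_sphere _ hr p.2)))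
        ((hT.comp continuous_fst).prodMk hcircle).continuousAt
  have hintegrand : Continuous fun p : X × ℝ =>
      deriv (circleMap (c p.1) r) p.2 • resolvent (T p.1) (circleMap (c p.1) r p.2) := by
    simp only [deriv_circleMap]
    exact ((continuous_circleMap 0 r).comp continuous_snd |>.mul continuous_const).smul hresolvent
  exact (intervalIntegral.continuous_parametric_intervalIntegral_of_continuous'
    (μ := MeasureTheory.volume)
    (f := fun x θ => deriv (circleMap (c x) r) θ • resolvent (T x) (circleMap (c x) r θ))
    hintegrand 0 (2 * Real.pi)).const_smul (2 * Real.pi * I)⁻¹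

end RieszProjection

theorem rieszProjection_apply_mem_eigenspace {E : Type*} [NormedAddCommGroup E]
    [InnerProductSpace ℂ E] [CompleteSpace E] [FiniteDimensional ℂ E] {T : E →L[ℂ] E}
    (hT : IsSelfAdjoint T) {l : ℂ} {r : ℝ} (hr : 0 < r)
    (hiso : ∀ μ, HasEigenvalue (T : E →ₗ[ℂ] E) μ → μ = l ∨ r < ‖μ - l‖) (v : E) :
    rieszProjection T l r v ∈ eigenspace (T : E →ₗ[ℂ] E) l := by
  have hres := sphere_subset_resolventSet hr hiso
  have hT' := ContinuousLinearMap.isSelfAdjoint_iff_isSymmetric.1 hT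
  have htop : ⨆ μ, eigenspace (T : E →ₗ[ℂ] E) μ = ⊤ :=
    Submodule.orthogonal_eq_bot_iff.1 hT'.orthogonalComplement_iSup_eigenspaces_eq_bot
  have hle : ⨆ μ, eigenspace (T : E →ₗ[ℂ] E) μ ≤
      (eigenspace (T : E →ₗ[ℂ] E) l).comap (rieszProjection T l r : E →ₗ[ℂ] E) := by
    refine iSup_le fun μ w hw => ?_
    rcases eq_or_ne w 0 with rfl | hw0
    · simp
    have hTw : T w = μ • w := mem_eigenspace_iff.1 hw
    rcases hiso μ (hasEigenvalue_of_hasEigenvector ⟨hw, hw0⟩) with rfl | hfar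
    · simpa [rieszProjection_apply_of_mem_ball hres hTw (mem_ball_self hr)] using hw
    · have hμ : μ ∉ closedBall l r := by simpa [dist_eq_norm] using hfar
      simp [rieszProjection_apply_of_notMem_closedBall hr.le hres hTw hμ]
  exact hle (htop ▸ Submodule.mem_top)

theorem Module.End.HasEigenvalue.exists_mem_eigenspace_norm_eq_one {𝕜 E : Type*} [RCLike 𝕜]
    [NormedAddCommGroup E] [NormedSpace 𝕜 E] {f : Module.End 𝕜 E} {μ : 𝕜} (h : f.HasEigenvalue μ) :
    ∃ v ∈ f.eigenspace μ, ‖v‖ = 1 := by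
  obtain ⟨v, hv, hv0⟩ := h.exists_hasEigenvector
  exact ⟨(‖v‖⁻¹ : 𝕜) • v, Submodule.smul_mem _ _ hv, norm_smul_inv_norm hv0⟩

section SelfAdjoint

variable {𝕜 E : Type*} [RCLike 𝕜] [NormedAddCommGroup E] [InnerProductSpace 𝕜 E]
  [CompleteSpace E] [FiniteDimensional 𝕜 E]

theorem IsSelfAdjoint.mul_norm_sq_le_re_inner {T : E →L[𝕜] E} (hT : IsSelfAdjoint T) {l : ℝ}
    (hl : ∀ μ, HasEigenvalue (T : E →ₗ[𝕜] E) μ → l ≤ RCLike.re μ) (v : E) :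
    l * ‖v‖ ^ 2 ≤ RCLike.re (inner 𝕜 (T v) v) := by
  rcases eq_or_ne v 0 with rfl | hv
  · simp
  have : Nontrivial E := nontrivial_of_ne v 0 hv
  have hmin :=
    (ContinuousLinearMap.isSelfAdjoint_iff_isSymmetric.1 hT).hasEigenvalue_iInf_of_finiteDimensional
  have hbdd : BddBelow (range fun x : { x : E // x ≠ 0 } =>
      RCLike.re (inner 𝕜 (T x) (x : E)) / ‖(x : E)‖ ^ 2) :=
    ⟨-‖T‖, by rintro _ ⟨x, rfl⟩; exact neg_le_of_abs_le (T.rayleighQuotient_le_norm x)⟩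
  have hlv : l ≤ RCLike.re (inner 𝕜 (T v) v) / ‖v‖ ^ 2 :=
    (by simpa using hl _ hmin : l ≤ _).trans (ciInf_le hbdd ⟨v, hv⟩)
  exact (le_div_iff₀ (by positivity)).1 hlv

def IsLowestEigenvalue (T : E →L[𝕜] E) (l : ℝ) : Prop :=
  HasEigenvalue (T : E →ₗ[𝕜] E) l ∧ ∀ μ, HasEigenvalue (T : E →ₗ[𝕜] E) μ → l ≤ RCLike.re μ

theorem le_add_norm_sub_of_hasEigenvalue {T₁ T₂ : E →L[𝕜] E} {l₁ l₂ : ℝ}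
    (h₁ : HasEigenvalue (T₁ : E →ₗ[𝕜] E) l₁) (hT₂ : IsSelfAdjoint T₂)
    (h₂ : ∀ μ, HasEigenvalue (T₂ : E →ₗ[𝕜] E) μ → l₂ ≤ RCLike.re μ) :
    l₂ ≤ l₁ + ‖T₂ - T₁‖ := by
  obtain ⟨v, hv, hv1⟩ := h₁.exists_mem_eigenspace_norm_eq_one
  have hT₁v : RCLike.re (inner 𝕜 (T₁ v) v) = l₁ := by
    rw [← ContinuousLinearMap.coe_coe, mem_eigenspace_iff.1 hv, inner_smul_left,
      inner_self_eq_norm_sq_to_K, hv1]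
    simp
  have hdiff : RCLike.re (inner 𝕜 ((T₂ - T₁) v) v) ≤ ‖T₂ - T₁‖ :=
    calc RCLike.re (inner 𝕜 ((T₂ - T₁) v) v) ≤ ‖(T₂ - T₁) v‖ * ‖v‖ := re_inner_le_norm _ _
      _ ≤ ‖T₂ - T₁‖ * ‖v‖ * ‖v‖ := by gcongr; exact (T₂ - T₁).le_opNorm v
      _ = ‖T₂ - T₁‖ := by rw [hv1, mul_one, mul_one]
  calc l₂ = l₂ * ‖v‖ ^ 2 := by rw [hv1, one_pow, mul_one]
    _ ≤ RCLike.re (inner 𝕜 (T₂ v) v) := hT₂.mul_norm_sq_le_re_inner h₂ v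
    _ = RCLike.re (inner 𝕜 (T₁ v) v) + RCLike.re (inner 𝕜 ((T₂ - T₁) v) v) := by
        rw [← map_add, ← inner_add_left, sub_apply, add_sub_cancel]
    _ ≤ l₁ + ‖T₂ - T₁‖ := by rw [hT₁v]; gcongr

theorem IsLowestEigenvalue.abs_sub_le_norm_sub {T₁ T₂ : E →L[𝕜] E} {l₁ l₂ : ℝ}
    (hT₁ : IsSelfAdjoint T₁) (hT₂ : IsSelfAdjoint T₂) (h₁ : IsLowestEigenvalue T₁ l₁)
    (h₂ : IsLowestEigenvalue T₂ l₂) : |l₁ - l₂| ≤ ‖T₁ - T₂‖ := by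
  have h₁₂ := le_add_norm_sub_of_hasEigenvalue h₁.1 hT₂ h₂.2
  have h₂₁ := le_add_norm_sub_of_hasEigenvalue h₂.1 hT₁ h₁.2
  rw [norm_sub_rev] at h₁₂
  exact abs_sub_le_iff.2 ⟨by linarith, by linarith⟩

theorem continuous_of_isLowestEigenvalue {X : Type*} [TopologicalSpace X] {T : X → E →L[𝕜] E}
    {l : X → ℝ} (hT : Continuous T) (hsa : ∀ x, IsSelfAdjoint (T x))
    (hl : ∀ x, IsLowestEigenvalue (T x) (l x)) : Continuous l := by
  refine continuous_iff_continuousAt.2 fun x => tendsto_iff_dist_tendsto_zero.2 ?_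
  refine squeeze_zero (fun _ => dist_nonneg) (fun y => ?_)
    (tendsto_iff_dist_tendsto_zero.1 (hT.tendsto x))
  rw [Real.dist_eq, dist_eq_norm]
  exact (hl y).abs_sub_le_norm_sub (hsa y) (hsa x) (hl x)

end SelfAdjoint

section UnitSection

variable {𝕜 E : Type*} [RCLike 𝕜] [NormedAddCommGroup E] [NormedSpace 𝕜 E]
  {P : ℝ → E →L[𝕜] E} {K : ℝ → Submodule 𝕜 E}

def IsUnitSectionOn (K : ℝ → Submodule 𝕜 E) (s : Set ℝ) (φ : ℝ → E) : Prop :=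
  ContinuousOn φ s ∧ ∀ t ∈ s, ‖φ t‖ = 1 ∧ φ t ∈ K t

theorem IsUnitSectionOn.extend {φ : ℝ → E} {a s s' : ℝ} (hφ : IsUnitSectionOn K (Icc a s) φ)
    (has : a ≤ s) (hss' : s ≤ s') (hP : ContinuousOn P (Icc s s'))
    (hPK : ∀ t ∈ Icc s s', ∀ v, P t v ∈ K t) (hPs : ∀ v ∈ K s, P s v = v)
    (hnear : ∀ t ∈ Icc s s', ‖P t - P s‖ < 1) :
    ∃ ψ, IsUnitSectionOn K (Icc a s') ψ := by
  obtain ⟨hv1, hvK⟩ := hφ.2 s ⟨has, le_rfl⟩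
  set v := φ s
  have hPv : ∀ t ∈ Icc s s', P t v ≠ 0 := by
    intro t ht h0
    have h : ‖(P t - P s) v‖ < 1 :=
      calc ‖(P t - P s) v‖ ≤ ‖P t - P s‖ * ‖v‖ := (P t - P s).le_opNorm v
        _ < 1 := by rw [hv1, mul_one]; exact hnear t ht
    rw [sub_apply, h0, hPs v hvK, zero_sub, norm_neg, hv1] at h
    exact h.false
  let g : ℝ → E := fun t => (‖P t v‖⁻¹ : 𝕜) • P t v
  have hgc : ContinuousOn g (Icc s s') := by
    have hPv' : ContinuousOn (fun t => P t v) (Icc s s') :=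
      (ContinuousLinearMap.apply 𝕜 E v).continuous.comp_continuousOn hP
    exact ((RCLike.continuous_ofReal.comp_continuousOn hPv'.norm).inv₀
      (by simpa using hPv)).smul hPv'
  have hgs : g s = v := by simp [g, hPs v hvK, hv1]
  refine ⟨fun t => if t ≤ s then φ t else g t, ?_, fun t ht => ?_⟩
  · rw [← Icc_union_Icc_eq_Icc has hss']
    refine ContinuousOn.union_of_isClosed ?_ ?_ isClosed_Icc isClosed_Icc
    · exact hφ.1.congr fun t ht => if_pos ht.2
    · refine hgc.congr fun t ht => ?_
      split_ifs with h
      · rw [le_antisymm h ht.1, hgs]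
      · rfl
  · dsimp only
    split_ifs with h
    · exact hφ.2 t ⟨ht.1, h⟩
    · have ht' : t ∈ Icc s s' := ⟨(not_le.1 h).le, ht.2⟩
      exact ⟨norm_smul_inv_norm (hPv t ht'), Submodule.smul_mem _ _ (hPK t ht' v)⟩

theorem exists_isUnitSectionOn_Icc {a b : ℝ} (hab : a ≤ b) (hP : ContinuousOn P (Icc a b))
    (hPK : ∀ t ∈ Icc a b, ∀ v, P t v ∈ K t) (hPfix : ∀ t ∈ Icc a b, ∀ v ∈ K t, P t v = v)
    {v₀ : E} (hv₀ : v₀ ∈ K a) (hv₀1 : ‖v₀‖ = 1) : ∃ φ, IsUnitSectionOn K (Icc a b) φ := by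
  obtain ⟨d, hd, hPd⟩ := Metric.uniformContinuousOn_iff.1
    (isCompact_Icc.uniformContinuousOn_of_continuous hP) 1 one_pos
  have hsteps : ∀ k : ℕ, ∀ s ∈ Icc a b, s ≤ a + k * (d / 2) →
      ∃ φ, IsUnitSectionOn K (Icc a s) φ := by
    intro k
    induction k with
    | zero =>
      intro s hs hsa
      obtain rfl : s = a := le_antisymm (by simpa using hsa) hs.1
      refine ⟨fun _ => v₀, continuousOn_const, fun t ht => ?_⟩
      obtain rfl : t = s := by simpa using ht
      exact ⟨hv₀1, hv₀⟩
    | succ k ih =>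
      intro s hs hsk
      set s₀ := max a (s - d / 2)
      have hs₀ : s₀ ∈ Icc a b := ⟨le_max_left _ _, max_le hab (by linarith [hs.2])⟩
      have hs₀s : s₀ ≤ s := max_le hs.1 (by linarith)
      have hs₀k : s₀ ≤ a + k * (d / 2) :=
        max_le (le_add_of_nonneg_right (by positivity)) (by push_cast at hsk; linarith)
      obtain ⟨φ, hφ⟩ := ih s₀ hs₀ hs₀k
      have hsub : Icc s₀ s ⊆ Icc a b := Icc_subset_Icc hs₀.1 hs.2
      refine hφ.extend hs₀.1 hs₀s (hP.mono hsub) (fun t ht => hPK t (hsub ht))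
        (hPfix s₀ hs₀) fun t ht => ?_
      rw [← dist_eq_norm]
      refine hPd t (hsub ht) s₀ hs₀ ?_
      rw [Real.dist_eq, abs_of_nonneg (by linarith [ht.1])]
      linarith [ht.2, le_max_right a (s - d / 2)]
  obtain ⟨k, hk⟩ := exists_nat_ge ((b - a) / (d / 2))
  exact hsteps k b ⟨hab, le_rfl⟩ (by rw [div_le_iff₀ (by positivity)] at hk; linarith)

end UnitSection

theorem lt_norm_sub_ofReal_of_add_lt_re {l δ : ℝ} {μ : ℂ} (h : l + δ < μ.re) : δ < ‖μ - l‖ :=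
  calc δ < (μ - l).re := by rw [sub_re, ofReal_re]; linarith
    _ ≤ ‖μ - l‖ := re_le_norm _

theorem continuous_ground_state_general
    {n : ℕ}
    (T T' : ℝ → (EuclideanSpace ℂ (Fin n) →L[ℂ] EuclideanSpace ℂ (Fin n)))
    (hTd : ∀ t : ℝ, HasDerivAt T (T' t) t)
    (hsa : ∀ t ∈ Icc (0:ℝ) 1, IsSelfAdjoint (T t))
    (lam0 : ℝ → ℝ) (δ : ℝ) (hδ : 0 < δ)
    (hlow : ∀ t ∈ Icc (0:ℝ) 1,
      Module.End.HasEigenvalue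
        (T t : EuclideanSpace ℂ (Fin n) →ₗ[ℂ] EuclideanSpace ℂ (Fin n)) ((lam0 t : ℝ) : ℂ))
    (hgap : ∀ t ∈ Icc (0:ℝ) 1, ∀ μ : ℂ,
      Module.End.HasEigenvalue
        (T t : EuclideanSpace ℂ (Fin n) →ₗ[ℂ] EuclideanSpace ℂ (Fin n)) μ →
      μ = ((lam0 t : ℝ) : ℂ) ∨ lam0 t + δ < μ.re) :
    ∃ φ : ℝ → EuclideanSpace ℂ (Fin n),
      ContinuousOn φ (Icc (0:ℝ) 1) ∧
      ∀ t ∈ Icc (0:ℝ) 1, ‖φ t‖ = 1 ∧ T t (φ t) = ((lam0 t : ℝ) : ℂ) • φ t := by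
  have hT : Continuous T := continuous_iff_continuousAt.2 fun t => (hTd t).continuousAt
  have hiso : ∀ t ∈ Icc (0:ℝ) 1, ∀ μ,
      HasEigenvalue (T t : EuclideanSpace ℂ (Fin n) →ₗ[ℂ] EuclideanSpace ℂ (Fin n)) μ →
      μ = lam0 t ∨ δ < ‖μ - lam0 t‖ := fun t ht μ hμ =>
    (hgap t ht μ hμ).imp_right lt_norm_sub_ofReal_of_add_lt_re
  have hlowest : ∀ t ∈ Icc (0:ℝ) 1, IsLowestEigenvalue (T t) (lam0 t) := fun t ht =>
    ⟨hlow t ht, fun μ hμ => (hgap t ht μ hμ).elim (fun h => by simp [h]) fun h => by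
      simp only [RCLike.re_to_complex]; linarith⟩
  have hT₀ : Continuous fun t : Icc (0:ℝ) 1 => T t := hT.comp continuous_subtype_val
  have hlam : ContinuousOn lam0 (Icc 0 1) := continuousOn_iff_continuous_domRestrict.2 <|
    continuous_of_isLowestEigenvalue hT₀ (fun t => hsa t t.2) fun t => hlowest t t.2
  have hP : ContinuousOn (fun t => rieszProjection (T t) (lam0 t) δ) (Icc 0 1) :=
    continuousOn_iff_continuous_domRestrict.2 <| continuous_rieszProjection hδ.le hT₀
      (continuous_ofReal.comp hlam.domRestrict) fun t => sphere_subset_resolventSet hδ (hiso t t.2)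
  obtain ⟨v₀, hv₀, hv₀1⟩ := (hlow 0 ⟨le_rfl, zero_le_one⟩).exists_mem_eigenspace_norm_eq_one
  obtain ⟨φ, hφc, hφ⟩ := exists_isUnitSectionOn_Icc zero_le_one hP
    (fun t ht => rieszProjection_apply_mem_eigenspace (hsa t ht) hδ (hiso t ht))
    (fun t ht v hv => rieszProjection_apply_of_mem_ball (sphere_subset_resolventSet hδ (hiso t ht))
      (mem_eigenspace_iff.1 hv) (mem_ball_self hδ)) hv₀ hv₀1
  exact ⟨φ, hφc, fun t ht => ⟨(hφ t ht).1, mem_eigenspace_iff.1 (hφ t ht).2⟩⟩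

theorem continuous_ground_state
    {n : ℕ}
    (T T' : ℝ → (EuclideanSpace ℂ (Fin n) →L[ℂ] EuclideanSpace ℂ (Fin n)))
    (hTd : ∀ t : ℝ, HasDerivAt T (T' t) t)
    (hT'c : Continuous T')
    (hsa : ∀ t ∈ Icc (0:ℝ) 1, IsSelfAdjoint (T t))
    (lam0 : ℝ → ℝ) (δ : ℝ) (hδ : 0 < δ)
    (hlow : ∀ t ∈ Icc (0:ℝ) 1,
      Module.End.HasEigenvalue
        (T t : EuclideanSpace ℂ (Fin n) →ₗ[ℂ] EuclideanSpace ℂ (Fin n)) ((lam0 t : ℝ) : ℂ))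
    (hgap : ∀ t ∈ Icc (0:ℝ) 1, ∀ μ : ℂ,
      Module.End.HasEigenvalue
        (T t : EuclideanSpace ℂ (Fin n) →ₗ[ℂ] EuclideanSpace ℂ (Fin n)) μ →
      μ = ((lam0 t : ℝ) : ℂ) ∨ lam0 t + δ < μ.re) :
    ∃ φ : ℝ → EuclideanSpace ℂ (Fin n),
      ContinuousOn φ (Icc (0:ℝ) 1) ∧
      ∀ t ∈ Icc (0:ℝ) 1, ‖φ t‖ = 1 ∧ T t (φ t) = ((lam0 t : ℝ) : ℂ) • φ t :=
  continuous_ground_state_general T T' hTd hsa lam0 δ hδ hlow hgap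
end

section
/- Let f : ℝᵖ × [0,1] → ℝ be twice continuously differentiable and θ* : [0,1] → ℝᵖ continuous such that for each t, θ*(t) is a local minimizer of f(·,t) and the Hessian ∇²_θ f(θ*(t),t) is positive definite. Then there exists ε > 0 such that for all t ∈ [0,1], θ*(t) is the unique stationary point of f(·,t) in the open ball of radius ε around θ*(t). -/
/-!
The map `Φ (θ, t) = (∇_θ f (θ, t), t)` is `C¹`, and at `(θ* t, t)` its derivative is injective
because the Hessian is positive definite. By the inverse function theorem `Φ` is injective on a
ball around each point of the compact curve `t ↦ (θ* t, t)`, and a Lebesgue number of this cover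
is a radius that works for every `t`: a stationary point `θ` of `f (·, t)` in it has
`Φ (θ, t) = (0, t) = Φ (θ* t, t)`.
-/

open Set Metric

open Function ContinuousLinearMap in
theorem ContinuousLinearMap.injective_prod_snd {𝕜 E T F : Type*} [Semiring 𝕜]
    [AddCommGroup E] [Module 𝕜 E] [TopologicalSpace E]
    [AddCommGroup T] [Module 𝕜 T] [TopologicalSpace T]
    [AddCommGroup F] [Module 𝕜 F] [TopologicalSpace F]
    {A : E × T →L[𝕜] F} (hA : Injective (A.comp (inl 𝕜 E T))) :
    Injective (A.prod (snd 𝕜 E T)) := by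
  refine (injective_iff_map_eq_zero _).2 fun w hw => ?_
  have hw₂ : w.2 = 0 := congrArg Prod.snd hw
  have hw₁ : A.comp (inl 𝕜 E T) w.1 = A.comp (inl 𝕜 E T) 0 := by
    rw [map_zero, comp_apply, inl_apply, ← hw₂]
    exact congrArg Prod.fst hw
  exact Prod.ext (hA hw₁) hw₂

theorem ContinuousLinearMap.injective_of_forall_inner_pos {E : Type*} [NormedAddCommGroup E]
    [InnerProductSpace ℝ E] {L : E →L[ℝ] E} (hL : ∀ v ≠ 0, 0 < inner ℝ (L v) v) :
    Function.Injective L := by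
  refine (injective_iff_map_eq_zero L).2 fun v hv => ?_
  by_contra hne
  simpa [hv] using hL v hne

theorem HasStrictFDerivAt.exists_injOn_ball {𝕜 E : Type*} [NontriviallyNormedField 𝕜]
    [CompleteSpace 𝕜] [NormedAddCommGroup E] [NormedSpace 𝕜 E] [FiniteDimensional 𝕜 E]
    {Φ : E → E} {L : E →L[𝕜] E} {x : E} (hΦ : HasStrictFDerivAt Φ L x)
    (hL : Function.Injective L) : ∃ r > 0, InjOn Φ (ball x r) := by
  have := FiniteDimensional.complete 𝕜 E
  let e : E ≃L[𝕜] E := (LinearEquiv.ofInjectiveEndo (L : E →ₗ[𝕜] E) hL).toContinuousLinearEquiv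
  have he : HasStrictFDerivAt Φ (e : E →L[𝕜] E) x := hΦ
  obtain ⟨r, hr, hball⟩ := isOpen_iff.mp (he.toOpenPartialHomeomorph Φ).open_source x
    he.mem_toOpenPartialHomeomorph_source
  exact ⟨r, hr, (he.toOpenPartialHomeomorph Φ).injOn.mono hball⟩

theorem IsCompact.exists_forall_injOn_ball {α β : Type*} [PseudoMetricSpace α] {K : Set α}
    (hK : IsCompact K) {Φ : α → β} (hloc : ∀ x ∈ K, ∃ r > 0, InjOn Φ (ball x r)) :
    ∃ ε > 0, ∀ x ∈ K, InjOn Φ (ball x ε) := by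
  choose! r hr hinj using hloc
  obtain ⟨ε, hε, hcover⟩ := lebesgue_number_lemma_of_metric (c := fun y : K => ball (y : α) (r y))
    hK (fun _ => isOpen_ball) fun x hx => mem_iUnion.2 ⟨⟨x, hx⟩, mem_ball_self (hr x hx)⟩
  refine ⟨ε, hε, fun x hx => ?_⟩
  obtain ⟨y, hy⟩ := hcover x hx
  exact (hinj y y.2).mono hy

theorem fderiv_comp_prodMk_left {𝕜 E T F : Type*} [NontriviallyNormedField 𝕜]
    [NormedAddCommGroup E] [NormedSpace 𝕜 E] [NormedAddCommGroup T] [NormedSpace 𝕜 T]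
    [NormedAddCommGroup F] [NormedSpace 𝕜 F] {g : E × T → F} {x : E} {t : T}
    (hg : DifferentiableAt 𝕜 g (x, t)) :
    fderiv 𝕜 (fun y => g (y, t)) x = (fderiv 𝕜 g (x, t)).comp (ContinuousLinearMap.inl 𝕜 E T) :=
  (hg.hasFDerivAt.comp x (hasFDerivAt_prodMk_left x t)).fderiv

theorem contDiff_partialGradient {E T : Type*} [NormedAddCommGroup E] [InnerProductSpace ℝ E]
    [CompleteSpace E] [NormedAddCommGroup T] [NormedSpace ℝ T] {f : E × T → ℝ} {n : WithTop ℕ∞}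
    (hf : ContDiff ℝ (n + 1) f) :
    ContDiff ℝ n fun z : E × T => gradient (fun x => f (x, z.2)) z.1 := by
  let restrict : (E × T →L[ℝ] ℝ) →L[ℝ] E →L[ℝ] ℝ :=
    (ContinuousLinearMap.compL ℝ E (E × T) ℝ).flip (ContinuousLinearMap.inl ℝ E T)
  have hgrad : (fun z : E × T => gradient (fun x => f (x, z.2)) z.1) =
      fun z => (InnerProductSpace.toDual ℝ E).symm (restrict (fderiv ℝ f z)) := by
    funext z
    rw [gradient, fderiv_comp_prodMk_left (hf.differentiable (by simp) _)]
    rfl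
  rw [hgrad]
  have hrestrict := restrict.contDiff.comp (hf.fderiv_right le_rfl)
  exact (InnerProductSpace.toDual ℝ E).symm.contDiff.comp hrestrict

theorem exists_injOn_ball_prodMk_snd {E T : Type*} [NormedAddCommGroup E] [NormedSpace ℝ E]
    [FiniteDimensional ℝ E] [NormedAddCommGroup T] [NormedSpace ℝ T] [FiniteDimensional ℝ T]
    {G : E × T → E} {z : E × T} (hG : ContDiffAt ℝ 1 G z)
    (hinj : Function.Injective ((fderiv ℝ G z).comp (ContinuousLinearMap.inl ℝ E T))) :
    ∃ r > 0, InjOn (fun w => (G w, w.2)) (ball z r) :=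
  ((hG.hasStrictFDerivAt one_ne_zero).prodMk (hasStrictFDerivAt_snd (p := z))).exists_injOn_ball
    (ContinuousLinearMap.injective_prod_snd hinj)

theorem uniform_local_uniqueness_of_minimizers_general
    {p : ℕ}
    (f : EuclideanSpace ℝ (Fin p) × ℝ → ℝ)
    (hf : ContDiff ℝ 2 f)
    (θs : ℝ → EuclideanSpace ℝ (Fin p))
    (hθc : ContinuousOn θs (Icc (0:ℝ) 1))
    (hstat : ∀ t ∈ Icc (0:ℝ) 1, gradient (fun θ => f (θ, t)) (θs t) = 0)
    (hhess : ∀ t ∈ Icc (0:ℝ) 1, ∀ v : EuclideanSpace ℝ (Fin p), v ≠ 0 →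
      0 < (inner ℝ ((fderiv ℝ (fun θ => gradient (fun x => f (x, t)) θ) (θs t)) v) v : ℝ)) :
    ∃ ε > (0:ℝ), ∀ t ∈ Icc (0:ℝ) 1, ∀ θ ∈ ball (θs t) ε,
      gradient (fun x => f (x, t)) θ = 0 → θ = θs t := by
  let G := fun z : EuclideanSpace ℝ (Fin p) × ℝ => gradient (fun x => f (x, z.2)) z.1
  have hG : ContDiff ℝ 1 G := contDiff_partialGradient hf
  have hK : IsCompact ((fun t => (θs t, t)) '' Icc (0:ℝ) 1) :=
    isCompact_Icc.image_of_continuousOn (hθc.prodMk continuousOn_id)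
  obtain ⟨ε, hε, hinj⟩ := hK.exists_forall_injOn_ball (Φ := fun z => (G z, z.2)) <| by
    rintro _ ⟨t, ht, rfl⟩
    refine exists_injOn_ball_prodMk_snd hG.contDiffAt ?_
    rw [← fderiv_comp_prodMk_left (hG.differentiable one_ne_zero _)]
    exact ContinuousLinearMap.injective_of_forall_inner_pos (hhess t ht)
  refine ⟨ε, hε, fun t ht θ hθ hcrit => ?_⟩
  have hθt : (θ, t) ∈ ball (θs t, t) ε := by rwa [mem_ball, dist_prod_same_right]
  have hsame : (G (θ, t), t) = (G (θs t, t), t) := by simp only [G, hcrit, hstat t ht]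
  exact congrArg Prod.fst (hinj _ (mem_image_of_mem _ ht) hθt (mem_ball_self hε) hsame)

theorem uniform_local_uniqueness_of_minimizers
    {p : ℕ}
    (f : EuclideanSpace ℝ (Fin p) × ℝ → ℝ)
    (hf : ContDiff ℝ 2 f)
    (θs : ℝ → EuclideanSpace ℝ (Fin p))
    (hθc : ContinuousOn θs (Icc (0:ℝ) 1))
    (hmin : ∀ t ∈ Icc (0:ℝ) 1, IsLocalMin (fun θ => f (θ, t)) (θs t))
    (hstat : ∀ t ∈ Icc (0:ℝ) 1, gradient (fun θ => f (θ, t)) (θs t) = 0)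
    (hhess : ∀ t ∈ Icc (0:ℝ) 1, ∀ v : EuclideanSpace ℝ (Fin p), v ≠ 0 →
      0 < (inner ℝ ((fderiv ℝ (fun θ => gradient (fun x => f (x, t)) θ) (θs t)) v) v : ℝ)) :
    ∃ ε > (0:ℝ), ∀ t ∈ Icc (0:ℝ) 1, ∀ θ ∈ ball (θs t) ε,
      gradient (fun x => f (x, t)) θ = 0 → θ = θs t :=
  uniform_local_uniqueness_of_minimizers_general f hf θs hθc hstat hhess
end
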